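/- Let Π* be an optimal policy for the risk-sensitive constrained MDP: Π* maximizes J_r(Π, α_r) over Markovian policies subject to J_c(Π, α_c) ≤ B. Then Π* is an optimal solution of the linear program LP(Π*): maximize Σ_{t=1}^{T-1} f_t(Π̃, Θ^{Π*}_r, Q^{Π*}_r) over policies Π̃ subject to f_t(Π̃, Θ^{Π*}_c, Q^{Π*}_c) ≤ B for all 1 ≤ t < T. That is, Π* ∈ M(Π*), so any optimal policy is a fixed point of the map Π ↦ M(Π). -/
import Mathlib


open Finset Real MeasureTheory

noncomputable section

variable {S A : Type*} [Fintype S] [Fintype A] [DecidableEq S] [DecidableEq A]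

namespace RiskCMDP

/-- Probability weight of a full trajectory `(s, a)` of `N` transitions under policy `d`,
kernel `p` and initial distribution `α`. -/
def trajWeight (N : ℕ) (α : S → ℝ) (d : ℕ → S → A → ℝ) (p : ℕ → S → A → S → ℝ)
    (s : Fin (N+1) → S) (a : Fin N → A) : ℝ :=
  α (s 0) * ∏ k : Fin N, d k (s k.castSucc) (a k) * p k (s k.castSucc) (a k) (s k.succ)

/-- Accumulated cost of a full trajectory, including terminal cost. -/
def totalCost (N : ℕ) (m : ℕ → S → A → S → ℝ) (mT : S → ℝ)
    (s : Fin (N+1) → S) (a : Fin N → A) : ℝ :=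
  (∑ k : Fin N, m k (s k.castSucc) (a k) (s k.succ)) + mT (s (Fin.last N))

/-- Risk-sensitive value `J_m(Π, α) = E[exp(Σ m_t + m_T)]`. -/
def J (N : ℕ) (α : S → ℝ) (d : ℕ → S → A → ℝ) (p : ℕ → S → A → S → ℝ)
    (m : ℕ → S → A → S → ℝ) (mT : S → ℝ) : ℝ :=
  ∑ s : Fin (N+1) → S, ∑ a : Fin N → A,
    trajWeight N α d p s a * Real.exp (totalCost N m mT s a)

/-- Forward factor `θ^Π_{m,t}(x) = E[exp(Σ_{k<t} m_k) 1{X_t = x}]` (0-based time `t`). -/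
def theta (α : S → ℝ) (d : ℕ → S → A → ℝ) (p : ℕ → S → A → S → ℝ)
    (m : ℕ → S → A → S → ℝ) (t : ℕ) (x : S) : ℝ :=
  ∑ s : Fin (t+1) → S, ∑ a : Fin t → A,
    (if s (Fin.last t) = x then
      α (s 0) * ∏ k : Fin t, (d k (s k.castSucc) (a k) * p k (s k.castSucc) (a k) (s k.succ)
        * Real.exp (m k (s k.castSucc) (a k) (s k.succ)))
     else 0)

/-- Backward factor with `r` remaining transitions (absolute time `N - r`). -/
def Qaux (N : ℕ) (d : ℕ → S → A → ℝ) (p : ℕ → S → A → S → ℝ)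
    (m : ℕ → S → A → S → ℝ) (mT : S → ℝ) : ℕ → S → A → ℝ
  | 0, x, _ => Real.exp (mT x)
  | (r+1), x, a =>
      ∑ x' : S, ∑ a' : A,
        Real.exp (m (N - (r+1)) x a x') * p (N - (r+1)) x a x'
          * d (N - r) x' a' * Qaux N d p m mT r x' a'

/-- Backward factor `Q^Π_{m,t}(x,a)` at (0-based) time `t ≤ N`. -/
def Qb (N : ℕ) (d : ℕ → S → A → ℝ) (p : ℕ → S → A → S → ℝ)
    (m : ℕ → S → A → S → ℝ) (mT : S → ℝ) (t : ℕ) (x : S) (a : A) : ℝ :=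
  Qaux N d p m mT (N - t) x a

/-- `f_t(Π̃, Θ^Π_m, Q^Π_m) = Σ_{x,a} θ^Π_{m,t}(x) d̃_t(x,a) Q^Π_{m,t}(x,a)`. -/
def fF (N : ℕ) (α : S → ℝ) (d dtil : ℕ → S → A → ℝ) (p : ℕ → S → A → S → ℝ)
    (m : ℕ → S → A → S → ℝ) (mT : S → ℝ) (t : ℕ) : ℝ :=
  ∑ x : S, ∑ a : A, theta α d p m t x * dtil t x a * Qb N d p m mT t x a

/-- A Markovian randomized policy. -/
def isPolicy (d : ℕ → S → A → ℝ) : Prop :=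
  (∀ t x a, 0 ≤ d t x a) ∧ ∀ t x, ∑ a : A, d t x a = 1

/-- A transition kernel. -/
def isKernel (p : ℕ → S → A → S → ℝ) : Prop :=
  (∀ t x a x', 0 ≤ p t x a x') ∧ ∀ t x a, ∑ x' : S, p t x a x' = 1

/-- A probability distribution on states. -/
def isDist (α : S → ℝ) : Prop := (∀ x, 0 ≤ α x) ∧ ∑ x : S, α x = 1

/-- The one-step modification `η^t_{Π,Π̃}`: follow `d` except at epoch `t`, where `dtil` is used. -/
def update (d dtil : ℕ → S → A → ℝ) (t : ℕ) : ℕ → S → A → ℝ :=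
  fun k => if k = t then dtil k else d k

/-- Feasibility for the risk-sensitive constrained MDP. -/
def feasible (N : ℕ) (αc : S → ℝ) (p : ℕ → S → A → S → ℝ) (c : ℕ → S → A → S → ℝ)
    (cT : S → ℝ) (B : ℝ) (d : ℕ → S → A → ℝ) : Prop :=
  isPolicy d ∧ J N αc d p c cT ≤ B

/-- Optimality for the risk-sensitive constrained MDP. -/
def optimalCMDP (N : ℕ) (αr αc : S → ℝ) (p : ℕ → S → A → S → ℝ)
    (r c : ℕ → S → A → S → ℝ) (rT cT : S → ℝ) (B : ℝ) (d : ℕ → S → A → ℝ) : Prop :=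
  feasible N αc p c cT B d ∧
    ∀ d', feasible N αc p c cT B d' → J N αr d' p r rT ≤ J N αr d p r rT

/-- Feasibility for the linear program `LP(Π)` with base policy `base`. -/
def LPfeas (N : ℕ) (αc : S → ℝ) (base : ℕ → S → A → ℝ) (p : ℕ → S → A → S → ℝ)
    (c : ℕ → S → A → S → ℝ) (cT : S → ℝ) (B : ℝ) (dtil : ℕ → S → A → ℝ) : Prop :=
  isPolicy dtil ∧ ∀ t, t < N → fF N αc base dtil p c cT t ≤ B

/-- Objective of `LP(Π)`: `Σ_t f_t(Π̃, Θ^Π_r, Q^Π_r)`. -/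
def LPobj (N : ℕ) (αr : S → ℝ) (base dtil : ℕ → S → A → ℝ) (p : ℕ → S → A → S → ℝ)
    (r : ℕ → S → A → S → ℝ) (rT : S → ℝ) : ℝ :=
  ∑ t ∈ Finset.range N, fF N αr base dtil p r rT t

/-- `dtil ∈ M(base)`: `dtil` is an optimal solution of `LP(base)`. -/
def LPopt (N : ℕ) (αr αc : S → ℝ) (base : ℕ → S → A → ℝ) (p : ℕ → S → A → S → ℝ)
    (r c : ℕ → S → A → S → ℝ) (rT cT : S → ℝ) (B : ℝ) (dtil : ℕ → S → A → ℝ) : Prop :=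
  LPfeas N αc base p c cT B dtil ∧
    ∀ d', LPfeas N αc base p c cT B d' →
      LPobj N αr base d' p r rT ≤ LPobj N αr base dtil p r rT


/-! ### Auxiliary lemmas -/

lemma theta_congr (α : S → ℝ) (d d' : ℕ → S → A → ℝ) (p : ℕ → S → A → S → ℝ)
    (m : ℕ → S → A → S → ℝ) (t : ℕ) (h : ∀ k, k < t → d k = d' k) :
    theta α d p m t = theta α d' p m t := by
  funext x
  unfold theta
  refine Finset.sum_congr rfl fun s _ => Finset.sum_congr rfl fun a _ => ?_
  split_ifs with hc
  · congr 1
    refine Finset.prod_congr rfl fun k _ => ?_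
    rw [h k k.isLt]
  · rfl

lemma Qaux_congr (N : ℕ) (d d' : ℕ → S → A → ℝ) (p : ℕ → S → A → S → ℝ)
    (m : ℕ → S → A → S → ℝ) (mT : S → ℝ) (r : ℕ) (hr : r ≤ N)
    (h : ∀ k, N - r < k → d k = d' k) :
    Qaux N d p m mT r = Qaux N d' p m mT r := by
  induction r with
  | zero => rfl
  | succ r ih =>
    funext x a
    show Qaux N d p m mT (r+1) x a = Qaux N d' p m mT (r+1) x a
    simp only [Qaux]
    have hd : d (N - r) = d' (N - r) := h _ (by omega)
    have hQ : Qaux N d p m mT r = Qaux N d' p m mT r :=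
      ih (by omega) (fun k hk => h k (by omega))
    rw [hd, hQ]

lemma J_eq_theta_exp (N : ℕ) (α : S → ℝ) (e : ℕ → S → A → ℝ) (p : ℕ → S → A → S → ℝ)
    (m : ℕ → S → A → S → ℝ) (mT : S → ℝ) :
    J N α e p m mT = ∑ x : S, theta α e p m N x * Real.exp (mT x) := by
  have key : ∀ (s : Fin (N+1) → S) (a : Fin N → A),
      trajWeight N α e p s a * Real.exp (totalCost N m mT s a)
      = (α (s 0) * ∏ k : Fin N, (e k (s k.castSucc) (a k) * p k (s k.castSucc) (a k) (s k.succ)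
          * Real.exp (m k (s k.castSucc) (a k) (s k.succ)))) * Real.exp (mT (s (Fin.last N))) := by
    intro s a
    unfold trajWeight totalCost
    rw [Real.exp_add, Real.exp_sum]
    simp only [Finset.prod_mul_distrib]
    ring
  unfold J theta
  simp only [key]
  symm
  simp only [Finset.sum_mul, ite_mul, zero_mul]
  rw [Finset.sum_comm]
  refine Finset.sum_congr rfl fun s _ => ?_
  rw [Finset.sum_comm]
  refine Finset.sum_congr rfl fun a _ => ?_
  rw [Finset.sum_ite_eq]
  simp

lemma theta_succ (α : S → ℝ) (e : ℕ → S → A → ℝ) (p : ℕ → S → A → S → ℝ)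
    (m : ℕ → S → A → S → ℝ) (t : ℕ) (x' : S) :
    theta α e p m (t+1) x'
      = ∑ x : S, ∑ b : A, theta α e p m t x *
          (e t x b * p t x b x' * Real.exp (m t x b x')) := by
  unfold theta
  have snoc0 : ∀ (y : Fin (t+1) → S), (Fin.snoc y x' : Fin (t+2) → S) 0 = y 0 := by
    intro y
    show (Fin.snoc y x' : Fin (t+2) → S) (Fin.castSucc 0) = y 0
    rw [Fin.snoc_castSucc]
  trans (∑ y : Fin (t+1) → S, ∑ a' : Fin t → A,
      (α (y 0) * ∏ j : Fin t, (e j (y j.castSucc) (a' j) * p j (y j.castSucc) (a' j) (y j.succ)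
          * Real.exp (m j (y j.castSucc) (a' j) (y j.succ))))
        * ∑ b : A, (e t (y (Fin.last t)) b * p t (y (Fin.last t)) b x'
            * Real.exp (m t (y (Fin.last t)) b x')))
  · rw [← (Fin.snocEquiv (fun _ => S)).sum_comp, Fintype.sum_prod_type]
    simp only [Fin.snocEquiv_apply, Fin.snoc_last]
    rw [Finset.sum_eq_single x' (fun b _ hb => by simp [hb])
        (fun h => absurd (Finset.mem_univ x') h)]
    simp only [if_pos rfl]
    refine Finset.sum_congr rfl fun y _ => ?_
    rw [← (Fin.snocEquiv (fun _ => A)).sum_comp, Fintype.sum_prod_type]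
    rw [Finset.sum_comm]
    simp only [Finset.mul_sum]
    refine Finset.sum_congr rfl fun a' _ => Finset.sum_congr rfl fun b _ => ?_
    simp only [Fin.snocEquiv_apply]
    rw [Fin.prod_univ_castSucc]
    simp only [Fin.snoc_castSucc, Fin.succ_castSucc, Fin.snoc_last, Fin.succ_last,
      Fin.coe_castSucc, Fin.val_last, snoc0, if_true]
    ring
  · symm
    simp only [Finset.sum_mul, ite_mul, zero_mul, Finset.mul_sum]
    conv_lhs => enter [2, x]; rw [Finset.sum_comm]
    rw [Finset.sum_comm]
    refine Finset.sum_congr rfl fun y _ => ?_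
    rw [Finset.sum_comm]
    conv_lhs => enter [2, b]; rw [Finset.sum_comm]
    rw [Finset.sum_comm]
    refine Finset.sum_congr rfl fun a' _ => Finset.sum_congr rfl fun b _ => ?_
    rw [Finset.sum_ite_eq]
    simp

lemma sum4_comm {M : Type*} [AddCommMonoid M] (f : S → A → S → A → M) :
    ∑ x : S, ∑ a : A, ∑ x' : S, ∑ a' : A, f x a x' a'
      = ∑ x' : S, ∑ a' : A, ∑ x : S, ∑ a : A, f x a x' a' := by
  calc ∑ x : S, ∑ a : A, ∑ x' : S, ∑ a' : A, f x a x' a'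
      = ∑ x : S, ∑ x' : S, ∑ a : A, ∑ a' : A, f x a x' a' :=
        Finset.sum_congr rfl fun x _ => Finset.sum_comm
    _ = ∑ x' : S, ∑ x : S, ∑ a : A, ∑ a' : A, f x a x' a' := Finset.sum_comm
    _ = ∑ x' : S, ∑ x : S, ∑ a' : A, ∑ a : A, f x a x' a' :=
        Finset.sum_congr rfl fun _ _ => Finset.sum_congr rfl fun _ _ => Finset.sum_comm
    _ = ∑ x' : S, ∑ a' : A, ∑ x : S, ∑ a : A, f x a x' a' :=
        Finset.sum_congr rfl fun _ _ => Finset.sum_comm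

lemma E_eq_J (N : ℕ) (α : S → ℝ) (e : ℕ → S → A → ℝ) (p : ℕ → S → A → S → ℝ)
    (m : ℕ → S → A → S → ℝ) (mT : S → ℝ)
    (he : ∀ x : S, ∑ a : A, e N x a = 1) :
    ∀ k t, t + k = N →
      (∑ x : S, ∑ a : A, theta α e p m t x * e t x a * Qaux N e p m mT (N - t) x a)
        = J N α e p m mT := by
  intro k
  induction k with
  | zero =>
    intro t ht
    have htN : t = N := by omega
    rw [htN]
    have h0 : N - N = 0 := by omega
    rw [h0, J_eq_theta_exp]
    refine Finset.sum_congr rfl fun x _ => ?_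
    show (∑ a : A, theta α e p m N x * e N x a * Real.exp (mT x)) = _
    calc ∑ a : A, theta α e p m N x * e N x a * Real.exp (mT x)
        = ∑ a : A, (theta α e p m N x * Real.exp (mT x)) * e N x a :=
          Finset.sum_congr rfl fun a _ => by ring
      _ = (theta α e p m N x * Real.exp (mT x)) * ∑ a : A, e N x a := by
          rw [Finset.mul_sum]
      _ = _ := by rw [he x, mul_one]
  | succ k ih =>
    intro t ht
    have h1 : N - t = (N - (t+1)) + 1 := by omega
    have h2 : N - ((N - (t+1)) + 1) = t := by omega
    have h3 : N - (N - (t+1)) = t + 1 := by omega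
    have key : (∑ x : S, ∑ a : A, theta α e p m t x * e t x a * Qaux N e p m mT (N - t) x a)
        = ∑ x' : S, ∑ a' : A, theta α e p m (t+1) x' * e (t+1) x' a'
            * Qaux N e p m mT (N - (t+1)) x' a' := by
      rw [h1]
      simp only [Qaux, h2, h3]
      simp only [theta_succ, Finset.mul_sum, Finset.sum_mul]
      rw [sum4_comm]
      refine Finset.sum_congr rfl fun x' _ => Finset.sum_congr rfl fun a' _ =>
        Finset.sum_congr rfl fun x _ => Finset.sum_congr rfl fun a _ => by ring
    rw [key]
    exact ih (t+1) (by omega)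

lemma update_isPolicy (d dtil : ℕ → S → A → ℝ) (t : ℕ)
    (hd : isPolicy d) (hdt : isPolicy dtil) : isPolicy (update d dtil t) := by
  constructor
  · intro k x a
    unfold update
    split_ifs
    exacts [hdt.1 k x a, hd.1 k x a]
  · intro k x
    unfold update
    split_ifs
    exacts [hdt.2 k x, hd.2 k x]

lemma fF_eq_J (N : ℕ) (α : S → ℝ) (d dtil : ℕ → S → A → ℝ) (p : ℕ → S → A → S → ℝ)
    (m : ℕ → S → A → S → ℝ) (mT : S → ℝ)
    (hd : isPolicy d) (hdt : isPolicy dtil) (t : ℕ) (ht : t < N) :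
    fF N α d dtil p m mT t = J N α (update d dtil t) p m mT := by
  set e := update d dtil t with he_def
  have hek : ∀ k, k ≠ t → e k = d k := by
    intro k hk
    simp [he_def, update, hk]
  have hθ : theta α d p m t = theta α e p m t :=
    theta_congr α d e p m t (fun k hk => (hek k (by omega)).symm)
  have hQ : Qaux N d p m mT (N - t) = Qaux N e p m mT (N - t) :=
    Qaux_congr N d e p m mT (N - t) (by omega)
      (fun k hk => (hek k (by omega)).symm)
  have het : dtil t = e t := by simp [he_def, update]
  have heN : ∀ x : S, ∑ a : A, e N x a = 1 := by
    intro x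
    rw [hek N (by omega)]
    exact hd.2 N x
  unfold fF Qb
  rw [hθ, hQ]
  simp only [het]
  exact E_eq_J N α e p m mT heN (N - t) t (by omega)

lemma update_self (d : ℕ → S → A → ℝ) (t : ℕ) : update d d t = d := by
  funext k
  simp [update]

/-- any optimal policy `Π*` of the risk-sensitive constrained MDP is an
optimal solution of its own linear program `LP(Π*)`, i.e. `Π* ∈ M(Π*)`. -/
theorem optimal_is_fixed_point (N : ℕ) (αr αc : S → ℝ) (p : ℕ → S → A → S → ℝ)
    (r c : ℕ → S → A → S → ℝ) (rT cT : S → ℝ) (B : ℝ)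
    (hp : isKernel p) (hαr : isDist αr) (hαc : isDist αc)
    (dstar : ℕ → S → A → ℝ)
    (hopt : optimalCMDP N αr αc p r c rT cT B dstar) :
    LPopt N αr αc dstar p r c rT cT B dstar := by
  obtain ⟨⟨hdpol, hdfeas⟩, hbest⟩ := hopt
  constructor
  · refine ⟨hdpol, fun t ht => ?_⟩
    rw [fF_eq_J N αc dstar dstar p c cT hdpol hdpol t ht, update_self]
    exact hdfeas
  · rintro d' ⟨hd'pol, hd'con⟩
    unfold LPobj
    refine Finset.sum_le_sum fun t ht => ?_
    rw [Finset.mem_range] at ht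
    rw [fF_eq_J N αr dstar d' p r rT hdpol hd'pol t ht,
        fF_eq_J N αr dstar dstar p r rT hdpol hdpol t ht, update_self]
    refine hbest _ ⟨update_isPolicy dstar d' t hdpol hd'pol, ?_⟩
    rw [← fF_eq_J N αc dstar d' p c cT hdpol hd'pol t ht]
    exact hd'con t ht

end RiskCMDP
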